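/- The explicit 27×27 matrix e′ = (1/5)·M, with M the integer/golden-ratio matrix given in the paper (blocks A,B,C,D,E,F,G and a 3×3 and 3×24 border), is a symmetric real matrix satisfying (e′)² = 1; hence e′ is an involution and an orthogonal matrix. -/

import Mathlib

/-! All entries of `M27 = 5e'` lie in `ℤ[τ]`, and `σ = 1 - τ`. So `M27` is the image, under the
ring hom `ω ↦ τ`, of the same matrix over `QuadraticAlgebra ℤ 1 1 = ℤ[ω]/(ω² - ω - 1)`, whose
entries are pairs of integers; there `M² = 25` is a finite computation, checked by the kernel, and
it transports to `ℝ` (indeed to any ring with a root of `X² - X - 1`). Symmetry is structural: the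
4×4 blocks are bisymmetric and the 6×6 array of blocks is symmetric. -/

noncomputable section
open Matrix

def σ : ℝ := (1 - Real.sqrt 5) / 2
def τ : ℝ := (1 + Real.sqrt 5) / 2

def A4 : Matrix (Fin 4) (Fin 4) ℝ := !![0,τ,σ,0; τ,0,0,σ; σ,0,0,τ; 0,σ,τ,0]
def B4 : Matrix (Fin 4) (Fin 4) ℝ := !![-1,τ,σ,-1; τ,-1,-1,σ; σ,-1,-1,τ; -1,σ,τ,-1]
def C4 : Matrix (Fin 4) (Fin 4) ℝ := !![1,σ,τ,1; σ,1,1,τ; τ,1,1,σ; 1,τ,σ,1]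
def D4 : Matrix (Fin 4) (Fin 4) ℝ := !![1,0,0,1; 0,1,1,0; 0,1,1,0; 1,0,0,1]
def E4 : Matrix (Fin 4) (Fin 4) ℝ := !![τ,1,1,σ; 1,σ,τ,1; 1,τ,σ,1; σ,1,1,τ]
def F4 : Matrix (Fin 4) (Fin 4) ℝ := !![-1,σ,τ,-1; σ,-1,-1,τ; τ,-1,-1,σ; -1,τ,σ,-1]
def G4 : Matrix (Fin 4) (Fin 4) ℝ := !![τ,0,0,σ; 0,σ,τ,0; 0,τ,σ,0; σ,0,0,τ]

/-- The 6×6 array of 4×4 blocks of `5e'`. -/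
def eblocks : Fin 6 → Fin 6 → Matrix (Fin 4) (Fin 4) ℝ :=
  ![![A4,B4,A4,D4,E4,F4], ![B4,C4,D4,G4,F4,G4], ![A4,D4,E4,F4,A4,B4],
    ![D4,G4,F4,G4,B4,C4], ![E4,F4,A4,B4,A4,D4], ![F4,G4,B4,C4,D4,G4]]

/-- Border scalars: `border r k` is the entry of `5e'` in block-row `r` (blocks of
four coordinates 4–27) and column `k` (of the first three columns), and
symmetrically. -/
def border : Fin 6 → Fin 3 → ℝ :=
  ![![0,-1,1], ![-1,0,1], ![1,0,-1], ![1,-1,0], ![-1,1,0], ![0,1,-1]]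

def top3 : Matrix (Fin 3) (Fin 3) ℝ := !![2,2,1; 2,1,2; 1,2,2]

/-- The matrix `5e'`. -/
def M27 : Matrix (Fin 27) (Fin 27) ℝ := Matrix.of fun i j =>
  if hi : (i : ℕ) < 3 then
    if hj : (j : ℕ) < 3 then top3 ⟨i, hi⟩ ⟨j, hj⟩
    else border ⟨((j : ℕ) - 3) / 4, by omega⟩ ⟨i, hi⟩
  else
    if hj : (j : ℕ) < 3 then border ⟨((i : ℕ) - 3) / 4, by omega⟩ ⟨j, hj⟩
    else eblocks ⟨((i : ℕ) - 3) / 4, by omega⟩ ⟨((j : ℕ) - 3) / 4, by omega⟩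
      ⟨((i : ℕ) - 3) % 4, by omega⟩ ⟨((j : ℕ) - 3) % 4, by omega⟩

/-- The involution `e' = (1/5) M`. -/
def e' : Matrix (Fin 27) (Fin 27) ℝ := (1 / 5 : ℝ) • M27

section
variable {α β : Type*}

def bisymm4 (a b c d e f : α) : Matrix (Fin 4) (Fin 4) α :=
  !![a,b,c,d; b,e,f,c; c,f,e,b; d,c,b,a]

theorem bisymm4_map (g : α → β) (a b c d e f : α) :
    (bisymm4 a b c d e f).map g = bisymm4 (g a) (g b) (g c) (g d) (g e) (g f) := by
  ext i j; fin_cases i <;> fin_cases j <;> rfl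

theorem bisymm4_isSymm (a b c d e f : α) : (bisymm4 a b c d e f).IsSymm := by
  ext i j; fin_cases i <;> fin_cases j <;> rfl

end

section
variable {R S : Type*} [Ring R] [Ring S]

def eblocksOf (s t : R) : Fin 6 → Fin 6 → Matrix (Fin 4) (Fin 4) R :=
  let A := bisymm4 0 t s 0 0 0
  let B := bisymm4 (-1) t s (-1) (-1) (-1)
  let C := bisymm4 1 s t 1 1 1
  let D := bisymm4 1 0 0 1 1 1
  let E := bisymm4 t 1 1 s s t
  let F := bisymm4 (-1) s t (-1) (-1) (-1)
  let G := bisymm4 t 0 0 s s t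
  ![![A,B,A,D,E,F], ![B,C,D,G,F,G], ![A,D,E,F,A,B],
    ![D,G,F,G,B,C], ![E,F,A,B,A,D], ![F,G,B,C,D,G]]

def borderOf : Fin 6 → Fin 3 → R :=
  ![![0,-1,1], ![-1,0,1], ![1,0,-1], ![1,-1,0], ![-1,1,0], ![0,1,-1]]

def top3Of : Matrix (Fin 3) (Fin 3) R := !![2,2,1; 2,1,2; 1,2,2]

def M27Of (s t : R) : Matrix (Fin 27) (Fin 27) R := Matrix.of fun i j =>
  if hi : (i : ℕ) < 3 then
    if hj : (j : ℕ) < 3 then top3Of ⟨i, hi⟩ ⟨j, hj⟩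
    else borderOf ⟨((j : ℕ) - 3) / 4, by omega⟩ ⟨i, hi⟩
  else
    if hj : (j : ℕ) < 3 then borderOf ⟨((i : ℕ) - 3) / 4, by omega⟩ ⟨j, hj⟩
    else eblocksOf s t ⟨((i : ℕ) - 3) / 4, by omega⟩ ⟨((j : ℕ) - 3) / 4, by omega⟩
      ⟨((i : ℕ) - 3) % 4, by omega⟩ ⟨((j : ℕ) - 3) % 4, by omega⟩

theorem M27_eq_M27Of : M27 = M27Of σ τ := rfl

theorem eblocksOf_comm (s t : R) (r c : Fin 6) : eblocksOf s t c r = eblocksOf s t r c := by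
  fin_cases r <;> fin_cases c <;> rfl

theorem eblocksOf_isSymm (s t : R) (r c : Fin 6) : (eblocksOf s t r c).IsSymm := by
  fin_cases r <;> fin_cases c <;> exact bisymm4_isSymm ..

theorem top3Of_isSymm : (top3Of : Matrix (Fin 3) (Fin 3) R).IsSymm := by
  ext i j; fin_cases i <;> fin_cases j <;> rfl

theorem M27Of_isSymm (s t : R) : (M27Of s t).IsSymm := by
  ext i j
  simp only [transpose_apply, M27Of, of_apply]
  split_ifs
  · exact top3Of_isSymm.apply _ _
  · rfl
  · rfl
  · rw [eblocksOf_comm]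
    exact (eblocksOf_isSymm ..).apply _ _

theorem eblocksOf_map (f : R →+* S) (s t : R) (r c : Fin 6) :
    (eblocksOf s t r c).map f = eblocksOf (f s) (f t) r c := by
  fin_cases r <;> fin_cases c <;> simp [eblocksOf, bisymm4_map]

theorem map_borderOf (f : R →+* S) (r : Fin 6) (k : Fin 3) : f (borderOf r k) = borderOf r k := by
  fin_cases r <;> fin_cases k <;> simp [borderOf]

theorem map_top3Of (f : R →+* S) (i j : Fin 3) : f (top3Of i j) = top3Of i j := by
  fin_cases i <;> fin_cases j <;> simp [top3Of, map_ofNat]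

theorem M27Of_map (f : R →+* S) (s t : R) : (M27Of s t).map f = M27Of (f s) (f t) := by
  ext i j
  simp only [map_apply, M27Of, of_apply]
  split_ifs
  · exact map_top3Of f _ _
  · exact map_borderOf f _ _
  · exact map_borderOf f _ _
  · exact congrFun₂ (eblocksOf_map f s t _ _) _ _

end

open QuadraticAlgebra

theorem M27Of_one_sub_omega_mul_self :
    M27Of (1 - ω : QuadraticAlgebra ℤ 1 1) ω * M27Of (1 - ω) ω = 25 := by
  decide +kernel

theorem M27Of_one_sub_mul_self {R : Type*} [Ring R] {t : R} (ht : t ^ 2 = t + 1) :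
    M27Of (1 - t) t * M27Of (1 - t) t = 25 := by
  let f : QuadraticAlgebra ℤ 1 1 →+* R :=
    (lift ⟨t, by rw [one_smul, one_smul, ← sq, ht, add_comm]⟩).toRingHom
  have hω : f ω = t := by simp [f]
  have hM : M27Of (1 - t) t = (M27Of (1 - ω) ω).map f := by
    rw [M27Of_map, map_sub, map_one, hω]
  rw [hM, ← Matrix.map_mul, M27Of_one_sub_omega_mul_self, Matrix.map_ofNat (map_zero f),
    map_ofNat, diagonal_ofNat]

theorem e'_symmetric_involution : e'ᵀ = e' ∧ e' * e' = 1 := by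
  have hM : M27 = M27Of (1 - τ) τ := by
    rw [M27_eq_M27Of, show 1 - τ = σ from Real.one_sub_goldenConj]
  refine ⟨?_, ?_⟩
  · rw [e', transpose_smul, hM, (M27Of_isSymm _ _).eq]
  · rw [e', smul_mul_smul_comm, hM, M27Of_one_sub_mul_self (t := τ) Real.goldenRatio_sq,
      ← diagonal_ofNat, ← diagonal_smul, ← diagonal_one]
    congr 1
    ext
    norm_num
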